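/- arXiv:2207.04732 — 3 statements merged into one kernel-verified Lean document; each statement's English description precedes it below -/
import Mathlib

section
/- (Pohozaev identity for classical decaying solutions.) Let N ≥ 3 be an integer, let f : ℝ → ℝ be continuous and set F(t) = ∫₀^t f(s) ds. Let u : ℝ^N → ℝ be twice continuously differentiable and suppose there are constants C, μ > 0 such that |u(x)| + ‖∇u(x)‖ ≤ C·exp(−μ‖x‖) for all x ∈ ℝ^N. If −Δu(x) + u(x) = f(u(x)) for every x ∈ ℝ^N, then ((N−2)/2)·∫_{ℝ^N} ‖∇u‖² + N·( (1/2)·∫_{ℝ^N} u² − ∫_{ℝ^N} F(u) ) = 0. -/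
/-!
Pohozaev's identity is the equation tested against the generator `x · ∇u` of dilations, written
in divergence form. With the energy density `G = (|∇u|² + u²)/2 - F(u)`, the vector field
`V_i = (x · ∇u) ∂_i u - x_i G` has divergence `|∇u|² - N G` wherever `-Δu + u = f(u)`: the terms
with second derivatives cancel by the symmetry of the Hessian. The exponential decay makes `V`
of size `O(R e^{-μR})` on the boundary of the cube `[-R, R]^N`, whose area is `O(R^{N-1})`, so the
divergence theorem on cubes gives `∫ div V = 0`; expanding `∫ G` gives the identity.
-/

open MeasureTheory Metric Set Filter

/-- The Laplacian of `u : ℝ^N → ℝ`: the sum of its second partial derivatives. -/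
noncomputable def lap {N : ℕ} (u : EuclideanSpace ℝ (Fin N) → ℝ)
    (x : EuclideanSpace ℝ (Fin N)) : ℝ :=
  ∑ i : Fin N, fderiv ℝ (fun y => fderiv ℝ u y (EuclideanSpace.single i (1 : ℝ))) x
    (EuclideanSpace.single i (1 : ℝ))

open Topology

lemma closedBall_zero_eq_Icc {ι : Type*} [Fintype ι] {R : ℝ} (hR : 0 ≤ R) :
    closedBall (0 : ι → ℝ) R = Icc (fun _ => -R) (fun _ => R) := by
  ext x
  simp [pi_norm_le_iff_of_nonneg hR, abs_le, Pi.le_def, forall_and]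

lemma norm_insertNth_of_norm_le {n : ℕ} {i : Fin (n + 1)} {c : ℝ} {y : Fin n → ℝ}
    (hy : ‖y‖ ≤ |c|) : ‖(Fin.insertNth i c y : Fin (n + 1) → ℝ)‖ = |c| := by
  refine le_antisymm ((pi_norm_le_iff_of_nonneg (abs_nonneg c)).2 fun j => ?_) ?_
  · refine Fin.succAboveCases i ?_ (fun k => ?_) j
    · simp
    · simpa using (norm_le_pi_norm y k).trans hy
  · simpa using norm_le_pi_norm (Fin.insertNth i c y : Fin (n + 1) → ℝ) i

section Divergence

variable {E : Type*} [NormedAddCommGroup E] [NormedSpace ℝ E] {n : ℕ}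

lemma norm_setIntegral_face_le {g : (Fin (n + 1) → ℝ) → E} {b : ℝ → ℝ}
    (hg : ∀ x, ‖g x‖ ≤ b ‖x‖) (i : Fin (n + 1)) {c R : ℝ} (hc : |c| = R) :
    ‖∫ y in closedBall (0 : Fin n → ℝ) R, g (Fin.insertNth i c y)‖ ≤ b R * (2 * R) ^ n := by
  subst hc
  have := norm_setIntegral_le_of_norm_le_const (μ := volume) (s := closedBall (0 : Fin n → ℝ) |c|)
    (f := fun y => g (Fin.insertNth i c y)) measure_closedBall_lt_top
    (fun y hy => (hg _).trans_eq (by rw [norm_insertNth_of_norm_le (by simpa using hy)]))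
  rwa [measureReal_def, Real.volume_pi_closedBall _ (abs_nonneg c), ENNReal.toReal_ofReal
    (by positivity), Fintype.card_fin] at this

lemma norm_setIntegral_divergence_closedBall_le {f : Fin (n + 1) → (Fin (n + 1) → ℝ) → E}
    {b : ℝ → ℝ} (hf : ∀ i, Differentiable ℝ (f i))
    (hdiv : Integrable fun x => ∑ i, fderiv ℝ (f i) x (Pi.single i 1))
    (hb : ∀ i x, ‖f i x‖ ≤ b ‖x‖) {R : ℝ} (hR : 0 ≤ R) :
    ‖∫ x in closedBall 0 R, ∑ i, fderiv ℝ (f i) x (Pi.single i 1)‖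
      ≤ 2 * (n + 1) * (2 * R) ^ n * b R := by
  have hle : (fun _ => -R : Fin (n + 1) → ℝ) ≤ fun _ => R := fun _ => by linarith
  have hface : Icc (fun _ => -R : Fin n → ℝ) (fun _ => R) = closedBall 0 R :=
    (closedBall_zero_eq_Icc hR).symm
  rw [closedBall_zero_eq_Icc hR, integral_divergence_of_hasFDerivAt_off_countable' _ _ hle f
    (fun i x => fderiv ℝ (f i) x) ∅ countable_empty (fun i => (hf i).continuous.continuousOn)
    (fun x _ i => (hf i x).hasFDerivAt) hdiv.integrableOn]
  calc _ ≤ ∑ _i : Fin (n + 1), (b R * (2 * R) ^ n + b R * (2 * R) ^ n) :=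
        (norm_sum_le _ _).trans (Finset.sum_le_sum fun i _ => (norm_sub_le _ _).trans
          (add_le_add (hface ▸ norm_setIntegral_face_le (hb i) i (abs_of_nonneg hR))
            (hface ▸ norm_setIntegral_face_le (hb i) i (by rw [abs_neg, abs_of_nonneg hR]))))
    _ = _ := by
        simp only [Finset.sum_const, Finset.card_univ, Fintype.card_fin, nsmul_eq_mul,
          Nat.cast_add, Nat.cast_one]
        ring

theorem integral_divergence_eq_zero_of_decay
    {f : Fin (n + 1) → (Fin (n + 1) → ℝ) → E} {b : ℝ → ℝ} (hf : ∀ i, Differentiable ℝ (f i))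
    (hdiv : Integrable fun x => ∑ i, fderiv ℝ (f i) x (Pi.single i 1))
    (hb : ∀ i x, ‖f i x‖ ≤ b ‖x‖) (hlim : Tendsto (fun R => R ^ n * b R) atTop (𝓝 0)) :
    ∫ x, ∑ i, fderiv ℝ (f i) x (Pi.single i 1) = 0 := by
  refine tendsto_nhds_unique
    ((aecover_closedBall (x := 0) tendsto_id).integral_tendsto_of_countably_generated hdiv) ?_
  have hbound : Tendsto (fun R : ℝ => 2 * (n + 1) * 2 ^ n * (R ^ n * b R)) atTop (𝓝 0) := by
    simpa using hlim.const_mul (2 * (n + 1) * 2 ^ n : ℝ)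
  refine squeeze_zero_norm' ?_ hbound
  filter_upwards [eventually_ge_atTop 0] with R hR
  refine (norm_setIntegral_divergence_closedBall_le hf hdiv hb hR).trans_eq ?_
  simp only [mul_pow]
  ring

end Divergence

lemma exp_neg_mul_norm_le_one {E : Type*} [NormedAddCommGroup E] {μ : ℝ} (hμ : 0 ≤ μ) (x : E) :
    Real.exp (-μ * ‖x‖) ≤ 1 :=
  Real.exp_le_one_iff.2 (by nlinarith [norm_nonneg x])

section ExpDecay

variable {E : Type*} [NormedAddCommGroup E] [NormedSpace ℝ E] [FiniteDimensional ℝ E]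
  [MeasurableSpace E] [BorelSpace E]

lemma integrable_exp_neg_mul_norm [Nontrivial E] (μ : Measure E) [μ.IsAddHaarMeasure] {b : ℝ}
    (hb : 0 < b) : Integrable (fun x => Real.exp (-b * ‖x‖)) μ := by
  rw [integrable_fun_norm_addHaar μ (f := fun y => Real.exp (-b * y))]
  refine (integrableOn_rpow_mul_exp_neg_mul_rpow (s := ((Module.finrank ℝ E - 1 : ℕ) : ℝ))
    (neg_one_lt_zero.trans_le (Nat.cast_nonneg _)) one_pos hb).congr_fun
    (fun y _ => ?_) measurableSet_Ioi
  simp [Real.rpow_natCast]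

lemma integrable_of_abs_le_mul_exp [Nontrivial E] (μ : Measure E) [μ.IsAddHaarMeasure]
    {g : E → ℝ} {K b : ℝ} (hb : 0 < b) (hg : Continuous g)
    (hgK : ∀ x, |g x| ≤ K * Real.exp (-b * ‖x‖)) : Integrable g μ :=
  ((integrable_exp_neg_mul_norm μ hb).const_mul K).mono' hg.aestronglyMeasurable
    (.of_forall hgK)

end ExpDecay

lemma tendsto_pow_mul_mul_exp_neg_mul {μ : ℝ} (hμ : 0 < μ) (n : ℕ) (A : ℝ) :
    Tendsto (fun R => R ^ n * (A * (R * Real.exp (-μ * R)))) atTop (𝓝 0) := by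
  have := (tendsto_rpow_mul_exp_neg_mul_atTop_nhds_zero ((n + 1 : ℕ) : ℝ) μ hμ).const_mul A
  simp only [Real.rpow_natCast, mul_zero] at this
  exact this.congr fun R => by ring

lemma exists_abs_intervalIntegral_le_mul_abs {f : ℝ → ℝ} (hf : Continuous f) (R : ℝ) :
    ∃ M, 0 ≤ M ∧ ∀ t, |t| ≤ R → |∫ s in (0 : ℝ)..t, f s| ≤ M * |t| := by
  obtain ⟨M, hM⟩ := (isCompact_Icc (a := -R) (b := R)).exists_bound_of_continuousOn
    hf.continuousOn
  refine ⟨max M 0, le_max_right _ _, fun t ht => ?_⟩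
  have hsub : uIoc 0 t ⊆ Icc (-R) R := uIoc_subset_uIcc.trans (uIcc_subset_Icc
    ⟨by linarith [abs_nonneg t], by linarith [abs_nonneg t]⟩ (abs_le.1 ht))
  simpa using intervalIntegral.norm_integral_le_of_norm_le_const
    fun s hs => (hM s (hsub hs)).trans (le_max_left M 0)

lemma norm_le_norm_toLp {ι : Type*} [Fintype ι] (y : ι → ℝ) : ‖y‖ ≤ ‖WithLp.toLp 2 y‖ :=
  (pi_norm_le_iff_of_nonneg (norm_nonneg _)).2 fun j => PiLp.norm_apply_le (WithLp.toLp 2 y) j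

noncomputable section

variable {N : ℕ}

local notation "ℝ^" n:max => EuclideanSpace ℝ (Fin n)

def partialDeriv (i : Fin N) (φ : ℝ^N → ℝ) (x : ℝ^N) : ℝ :=
  fderiv ℝ φ x (EuclideanSpace.single i 1)

local notation "∂" => partialDeriv

section Calculus

variable {i : Fin N} {x : ℝ^N} {φ ψ : ℝ^N → ℝ}

lemma partialDeriv_add (hφ : DifferentiableAt ℝ φ x) (hψ : DifferentiableAt ℝ ψ x) :
    ∂ i (fun y => φ y + ψ y) x = ∂ i φ x + ∂ i ψ x := by
  simp [partialDeriv, fderiv_fun_add hφ hψ]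

lemma partialDeriv_sub (hφ : DifferentiableAt ℝ φ x) (hψ : DifferentiableAt ℝ ψ x) :
    ∂ i (fun y => φ y - ψ y) x = ∂ i φ x - ∂ i ψ x := by
  simp [partialDeriv, fderiv_fun_sub hφ hψ]

lemma partialDeriv_mul (hφ : DifferentiableAt ℝ φ x) (hψ : DifferentiableAt ℝ ψ x) :
    ∂ i (fun y => φ y * ψ y) x = ∂ i φ x * ψ x + φ x * ∂ i ψ x := by
  simp only [partialDeriv, fderiv_fun_mul hφ hψ, add_apply, smul_apply, smul_eq_mul]
  ring

lemma partialDeriv_div_const (hφ : DifferentiableAt ℝ φ x) (c : ℝ) :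
    ∂ i (fun y => φ y / c) x = ∂ i φ x / c := by
  simp [partialDeriv, div_eq_mul_inv, fderiv_mul_const hφ, mul_comm]

lemma partialDeriv_sq (hφ : DifferentiableAt ℝ φ x) :
    ∂ i (fun y => φ y ^ 2) x = 2 * φ x * ∂ i φ x := by
  simp only [pow_two, partialDeriv_mul hφ hφ]
  ring

lemma partialDeriv_sum {ι : Type*} {s : Finset ι} {φ : ι → ℝ^N → ℝ}
    (hφ : ∀ j ∈ s, DifferentiableAt ℝ (φ j) x) :
    ∂ i (fun y => ∑ j ∈ s, φ j y) x = ∑ j ∈ s, ∂ i (φ j) x := by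
  simp [partialDeriv, fderiv_fun_sum hφ]

lemma partialDeriv_comp {F f : ℝ → ℝ} (hF : HasDerivAt F (f (φ x)) (φ x))
    (hφ : DifferentiableAt ℝ φ x) : ∂ i (fun y => F (φ y)) x = f (φ x) * ∂ i φ x := by
  have h : HasFDerivAt (fun y => F (φ y)) _ x := hF.comp_hasFDerivAt x hφ.hasFDerivAt
  rw [partialDeriv, partialDeriv, h.fderiv]
  simp

lemma differentiableAt_coord (j : Fin N) (x : ℝ^N) : DifferentiableAt ℝ (fun y : ℝ^N => y j) x := by
  fun_prop

lemma partialDeriv_coord (i j : Fin N) (x : ℝ^N) :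
    ∂ i (fun y => y j) x = if i = j then 1 else 0 := by
  rw [partialDeriv, (PiLp.hasFDerivAt_apply (𝕜 := ℝ) 2 x j).fderiv]
  simp [eq_comm]

end Calculus

lemma lap_eq_sum_partialDeriv (u : ℝ^N → ℝ) (x : ℝ^N) : lap u x = ∑ i, ∂ i (∂ i u) x := rfl

lemma ContDiff.partialDeriv {n : WithTop ℕ∞} {u : ℝ^N → ℝ} (hu : ContDiff ℝ (n + 1) u)
    (i : Fin N) : ContDiff ℝ n (∂ i u) :=
  (hu.fderiv_right le_rfl).clm_apply contDiff_const

lemma differentiable_partialDeriv {u : ℝ^N → ℝ} (hu : ContDiff ℝ 2 u) (j : Fin N) :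
    Differentiable ℝ (∂ j u) :=
  (hu.partialDeriv (n := 1) j).differentiable one_ne_zero

lemma partialDeriv_comm {u : ℝ^N → ℝ} (hu : ContDiff ℝ 2 u) (i j : Fin N) (x : ℝ^N) :
    ∂ i (∂ j u) x = ∂ j (∂ i u) x := by
  have hd : DifferentiableAt ℝ (fderiv ℝ u) x :=
    (hu.fderiv_right (m := 1) le_rfl).differentiable one_ne_zero x
  have hsecond : ∀ k l, ∂ k (∂ l u) x
      = fderiv ℝ (fderiv ℝ u) x (EuclideanSpace.single k 1) (EuclideanSpace.single l 1) :=
    fun k l => by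
      have h : HasFDerivAt (∂ l u) _ x := hd.hasFDerivAt.clm_apply (hasFDerivAt_const _ x)
      rw [partialDeriv, h.fderiv]
      simp
  rw [hsecond, hsecond, hu.contDiffAt.isSymmSndFDerivAt (by simp)]

lemma gradient_apply_eq_partialDeriv (u : ℝ^N → ℝ) (x : ℝ^N) (j : Fin N) :
    gradient u x j = ∂ j u x := by
  rw [partialDeriv, gradient, ← InnerProductSpace.toDual_symm_apply (𝕜 := ℝ),
    EuclideanSpace.inner_single_right]
  simp

lemma norm_gradient_sq_eq_sum (u : ℝ^N → ℝ) (x : ℝ^N) :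
    ‖gradient u x‖ ^ 2 = ∑ j, ∂ j u x ^ 2 := by
  simp [EuclideanSpace.norm_sq_eq, gradient_apply_eq_partialDeriv]

lemma abs_partialDeriv_le_norm_gradient (u : ℝ^N → ℝ) (x : ℝ^N) (j : Fin N) :
    |∂ j u x| ≤ ‖gradient u x‖ := by
  simpa [gradient_apply_eq_partialDeriv] using PiLp.norm_apply_le (gradient u x) j

/-- The decay is measured in the sup norm of the coordinates, in which the cubes of the
divergence theorem are balls. -/
lemma integral_sum_partialDeriv_eq_zero_of_decay {n : ℕ} {V : Fin (n + 1) → ℝ^(n + 1) → ℝ}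
    {b : ℝ → ℝ} (hV : ∀ i, Differentiable ℝ (V i)) (hdiv : Integrable fun x => ∑ i, ∂ i (V i) x)
    (hb : ∀ i (y : Fin (n + 1) → ℝ), |V i (WithLp.toLp 2 y)| ≤ b ‖y‖)
    (hlim : Tendsto (fun R => R ^ n * b R) atTop (𝓝 0)) :
    ∫ x, ∑ i, ∂ i (V i) x = 0 := by
  have hchain : ∀ i y, fderiv ℝ (fun y => V i (WithLp.toLp 2 y)) y (Pi.single i 1)
      = ∂ i (V i) (WithLp.toLp 2 y) := fun i y => by
    have h : HasFDerivAt (fun y => V i (WithLp.toLp 2 y)) _ y :=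
      (hV i _).hasFDerivAt.comp y (PiLp.hasFDerivAt_toLp 2 y)
    rw [h.fderiv]
    rfl
  have hemb := (MeasurableEquiv.toLp 2 (Fin (n + 1) → ℝ)).measurableEmbedding
  rw [← (PiLp.volume_preserving_toLp (Fin (n + 1))).integral_comp hemb]
  rw [← (PiLp.volume_preserving_toLp (Fin (n + 1))).integrable_comp_emb hemb] at hdiv
  simp only [← hchain] at hdiv ⊢
  exact integral_divergence_eq_zero_of_decay
    (fun i => (hV i).comp fun y => (PiLp.hasFDerivAt_toLp 2 y).differentiableAt) hdiv hb hlim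

def dilationDeriv (u : ℝ^N → ℝ) (x : ℝ^N) : ℝ :=
  ∑ j, x j * ∂ j u x

def energyDensity (F : ℝ → ℝ) (u : ℝ^N → ℝ) (x : ℝ^N) : ℝ :=
  (∑ j, ∂ j u x ^ 2 + u x ^ 2) / 2 - F (u x)

def pohozaevField (F : ℝ → ℝ) (u : ℝ^N → ℝ) (i : Fin N) (x : ℝ^N) : ℝ :=
  dilationDeriv u x * ∂ i u x - x i * energyDensity F u x

section PohozaevField

variable {u : ℝ^N → ℝ} {f F : ℝ → ℝ}

lemma differentiable_dilationDeriv (hu : ContDiff ℝ 2 u) : Differentiable ℝ (dilationDeriv u) := by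
  have := differentiable_partialDeriv hu
  unfold dilationDeriv
  fun_prop

lemma differentiable_energyDensity (hu : ContDiff ℝ 2 u) (hF : Differentiable ℝ F) :
    Differentiable ℝ (energyDensity F u) := by
  have := differentiable_partialDeriv hu
  have := hu.differentiable two_ne_zero
  unfold energyDensity
  fun_prop

lemma differentiable_pohozaevField (hu : ContDiff ℝ 2 u) (hF : Differentiable ℝ F) (i : Fin N) :
    Differentiable ℝ (pohozaevField F u i) := by
  have := differentiable_partialDeriv hu
  have := differentiable_dilationDeriv hu
  have := differentiable_energyDensity hu hF
  unfold pohozaevField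
  fun_prop

lemma partialDeriv_dilationDeriv (hu : ContDiff ℝ 2 u) (i : Fin N) (x : ℝ^N) :
    ∂ i (dilationDeriv u) x = ∂ i u x + ∑ j, x j * ∂ i (∂ j u) x := by
  have hdu := differentiable_partialDeriv hu
  unfold dilationDeriv
  rw [partialDeriv_sum (φ := fun j y => y j * ∂ j u y)
    fun j _ => (differentiableAt_coord j x).mul (hdu j x)]
  simp only [partialDeriv_mul (differentiableAt_coord _ x) (hdu _ x), partialDeriv_coord,
    Finset.sum_add_distrib, ite_mul, one_mul, zero_mul, Finset.sum_ite_eq, Finset.mem_univ,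
    if_true]

lemma partialDeriv_energyDensity (hu : ContDiff ℝ 2 u) (hF : ∀ t, HasDerivAt F (f t) t)
    (i : Fin N) (x : ℝ^N) :
    ∂ i (energyDensity F u) x = ∑ j, ∂ j u x * ∂ i (∂ j u) x + (u x - f (u x)) * ∂ i u x := by
  have hdu := differentiable_partialDeriv hu
  have hu' := hu.differentiable two_ne_zero
  have hF' : Differentiable ℝ F := fun t => (hF t).differentiableAt
  unfold energyDensity
  rw [partialDeriv_sub (by fun_prop) (by fun_prop), partialDeriv_div_const (by fun_prop),
    partialDeriv_add (by fun_prop) (by fun_prop), partialDeriv_sum (φ := fun j y => ∂ j u y ^ 2)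
    (fun j _ => by fun_prop), partialDeriv_comp (hF _) (hu' x), partialDeriv_sq (hu' x)]
  simp only [partialDeriv_sq (hdu _ x), mul_assoc, ← Finset.mul_sum]
  ring

lemma partialDeriv_pohozaevField (hu : ContDiff ℝ 2 u) (hF : Differentiable ℝ F)
    (i : Fin N) (x : ℝ^N) :
    ∂ i (pohozaevField F u i) x = ∂ i (dilationDeriv u) x * ∂ i u x
      + dilationDeriv u x * ∂ i (∂ i u) x - energyDensity F u x
      - x i * ∂ i (energyDensity F u) x := by
  have hdu := differentiable_partialDeriv hu
  have hw := differentiable_dilationDeriv hu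
  have hG := differentiable_energyDensity hu hF
  unfold pohozaevField
  rw [partialDeriv_sub (by fun_prop) (by fun_prop), partialDeriv_mul (hw x) (hdu i x),
    partialDeriv_mul (differentiableAt_coord i x) (hG x), partialDeriv_coord, if_pos rfl]
  ring

lemma sum_partialDeriv_pohozaevField (hu : ContDiff ℝ 2 u) (hF : ∀ t, HasDerivAt F (f t) t)
    {x : ℝ^N} (heq : -lap u x + u x = f (u x)) :
    ∑ i, ∂ i (pohozaevField F u i) x = ∑ j, ∂ j u x ^ 2 - N * energyDensity F u x := by
  have hhessian : ∑ i, (∑ j, x j * ∂ i (∂ j u) x) * ∂ i u x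
      = ∑ i, x i * ∑ j, ∂ j u x * ∂ i (∂ j u) x := by
    simp only [Finset.sum_mul, Finset.mul_sum]
    rw [Finset.sum_comm]
    refine Finset.sum_congr rfl fun i _ => Finset.sum_congr rfl fun j _ => ?_
    rw [partialDeriv_comm hu]
    ring
  have hdil : ∑ i, x i * ((u x - f (u x)) * ∂ i u x) = dilationDeriv u x * (u x - f (u x)) := by
    rw [dilationDeriv, Finset.sum_mul]
    exact Finset.sum_congr rfl fun i _ => by ring
  have hlap : ∑ i, ∂ i (∂ i u) x = u x - f (u x) := by
    rw [← lap_eq_sum_partialDeriv]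
    linarith
  simp only [partialDeriv_pohozaevField hu (fun t => (hF t).differentiableAt),
    partialDeriv_dilationDeriv hu, partialDeriv_energyDensity hu hF, Finset.sum_sub_distrib,
    Finset.sum_add_distrib, add_mul, mul_add, Finset.sum_const, Finset.card_univ,
    Fintype.card_fin, nsmul_eq_mul, ← Finset.mul_sum, hlap]
  rw [hhessian, hdil]
  simp only [sq]
  ring

end PohozaevField

section Decay

variable {u : ℝ^N → ℝ} {F : ℝ → ℝ} {C μ M : ℝ}
  (hdecay : ∀ x, |u x| + ‖gradient u x‖ ≤ C * Real.exp (-μ * ‖x‖))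
include hdecay

lemma sum_sq_partialDeriv_le_of_decay (hμ : 0 ≤ μ) (x : ℝ^N) :
    ∑ j, ∂ j u x ^ 2 ≤ C ^ 2 * Real.exp (-μ * ‖x‖) := by
  rw [← norm_gradient_sq_eq_sum]
  nlinarith [hdecay x, abs_nonneg (u x), norm_nonneg (gradient u x),
    exp_neg_mul_norm_le_one hμ x, Real.exp_pos (-μ * ‖x‖)]

lemma sq_le_of_decay (hμ : 0 ≤ μ) (x : ℝ^N) : u x ^ 2 ≤ C ^ 2 * Real.exp (-μ * ‖x‖) := by
  rw [← sq_abs]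
  nlinarith [hdecay x, abs_nonneg (u x), norm_nonneg (gradient u x),
    exp_neg_mul_norm_le_one hμ x, Real.exp_pos (-μ * ‖x‖)]

lemma abs_comp_le_of_decay (hμ : 0 ≤ μ) (hM : 0 ≤ M) (hFM : ∀ t, |t| ≤ C → |F t| ≤ M * |t|)
    (x : ℝ^N) : |F (u x)| ≤ M * C * Real.exp (-μ * ‖x‖) := by
  have hu : |u x| ≤ C * Real.exp (-μ * ‖x‖) := by
    linarith [hdecay x, norm_nonneg (gradient u x)]
  have hC : 0 ≤ C := nonneg_of_mul_nonneg_left ((abs_nonneg _).trans hu) (Real.exp_pos _)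
  refine (hFM _ (hu.trans ?_)).trans ?_
  · nlinarith [exp_neg_mul_norm_le_one hμ x]
  · rw [mul_assoc]
    exact mul_le_mul_of_nonneg_left hu hM

lemma abs_energyDensity_le_of_decay (hμ : 0 ≤ μ) (hM : 0 ≤ M)
    (hFM : ∀ t, |t| ≤ C → |F t| ≤ M * |t|) (x : ℝ^N) :
    |energyDensity F u x| ≤ (C ^ 2 + M * C) * Real.exp (-μ * ‖x‖) := by
  have h₁ := sum_sq_partialDeriv_le_of_decay hdecay hμ x
  have h₂ := sq_le_of_decay hdecay hμ x
  have h₃ := abs_comp_le_of_decay hdecay hμ hM hFM x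
  have h₀ : 0 ≤ ∑ j, ∂ j u x ^ 2 := Finset.sum_nonneg fun j _ => sq_nonneg _
  rw [energyDensity, abs_le] at *
  constructor <;> nlinarith [sq_nonneg (u x)]

end Decay

lemma abs_pohozaevField_toLp_le {u : ℝ^N → ℝ} {F : ℝ → ℝ} {C K μ : ℝ} (hμ : 0 ≤ μ)
    (hdu : ∀ j x, |∂ j u x| ≤ C * Real.exp (-μ * ‖x‖))
    (hG : ∀ x, |energyDensity F u x| ≤ K * Real.exp (-μ * ‖x‖)) (i : Fin N) (y : Fin N → ℝ) :
    |pohozaevField F u i (WithLp.toLp 2 y)| ≤ (N * C ^ 2 + K) * (‖y‖ * Real.exp (-μ * ‖y‖)) := by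
  set x := WithLp.toLp 2 y
  set e := Real.exp (-μ * ‖x‖)
  have he0 : 0 < e := Real.exp_pos _
  have he1 : e ≤ 1 := exp_neg_mul_norm_le_one hμ x
  have hey : e ≤ Real.exp (-μ * ‖y‖) :=
    Real.exp_le_exp.2 (by nlinarith [norm_le_norm_toLp y])
  have hC : 0 ≤ C := nonneg_of_mul_nonneg_left ((abs_nonneg _).trans (hdu i x)) he0
  have hK : 0 ≤ K := nonneg_of_mul_nonneg_left ((abs_nonneg _).trans (hG x)) he0
  have hcoord : ∀ j, |x j| ≤ ‖y‖ := fun j => norm_le_pi_norm y j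
  have hw : |dilationDeriv u x| ≤ N * (‖y‖ * (C * e)) := by
    refine (Finset.abs_sum_le_sum_abs _ _).trans ?_
    refine (Finset.sum_le_sum fun j _ => ?_).trans_eq
      (by rw [Finset.sum_const, Finset.card_univ, Fintype.card_fin, nsmul_eq_mul])
    rw [abs_mul]
    exact mul_le_mul (hcoord j) (hdu j x) (abs_nonneg _) (norm_nonneg y)
  calc |pohozaevField F u i x|
      ≤ |dilationDeriv u x| * |∂ i u x| + |x i| * |energyDensity F u x| := by
        rw [pohozaevField, ← abs_mul, ← abs_mul]
        exact abs_sub _ _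
    _ ≤ N * (‖y‖ * (C * e)) * (C * e) + ‖y‖ * (K * e) := by
        gcongr
        exacts [hdu i x, hcoord i, hG x]
    _ ≤ (N * C ^ 2 + K) * (‖y‖ * Real.exp (-μ * ‖y‖)) := by
        have hy := norm_nonneg y
        have hee : e * e ≤ Real.exp (-μ * ‖y‖) := by nlinarith
        have hN : (0 : ℝ) ≤ N := Nat.cast_nonneg N
        nlinarith [mul_le_mul_of_nonneg_left hee (by positivity : 0 ≤ (N : ℝ) * C ^ 2 * ‖y‖),
          mul_le_mul_of_nonneg_left hey (by positivity : 0 ≤ K * ‖y‖)]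

section Integrability

variable [NeZero N] {u : ℝ^N → ℝ} {F : ℝ → ℝ} {C μ M : ℝ} (hu : ContDiff ℝ 2 u) (hμ : 0 < μ)
  (hdecay : ∀ x, |u x| + ‖gradient u x‖ ≤ C * Real.exp (-μ * ‖x‖))
include hu hμ hdecay

lemma integrable_sum_sq_partialDeriv : Integrable fun x => ∑ j, ∂ j u x ^ 2 :=
  integrable_of_abs_le_mul_exp volume hμ
    (continuous_finsetSum _ fun j _ => (differentiable_partialDeriv hu j).continuous.pow 2)
    fun x => by
      rw [abs_of_nonneg (Finset.sum_nonneg fun j _ => sq_nonneg _)]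
      exact sum_sq_partialDeriv_le_of_decay hdecay hμ.le x

lemma integrable_sq : Integrable fun x => u x ^ 2 :=
  integrable_of_abs_le_mul_exp volume hμ (hu.continuous.pow 2)
    fun x => by rw [abs_sq]; exact sq_le_of_decay hdecay hμ.le x

lemma integrable_energyDensity (hF : Differentiable ℝ F) (hM : 0 ≤ M)
    (hFM : ∀ t, |t| ≤ C → |F t| ≤ M * |t|) : Integrable (energyDensity F u) :=
  integrable_of_abs_le_mul_exp volume hμ (differentiable_energyDensity hu hF).continuous
    (abs_energyDensity_le_of_decay hdecay hμ.le hM hFM)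

lemma integral_energyDensity (hF : Continuous F) (hM : 0 ≤ M)
    (hFM : ∀ t, |t| ≤ C → |F t| ≤ M * |t|) :
    ∫ x, energyDensity F u x
      = ((∫ x, ∑ j, ∂ j u x ^ 2) + ∫ x, u x ^ 2) / 2 - ∫ x, F (u x) := by
  have hP := integrable_sum_sq_partialDeriv hu hμ hdecay
  have hu2 := integrable_sq hu hμ hdecay
  have hsum : Integrable fun x => (∑ j, ∂ j u x ^ 2 + u x ^ 2) / 2 := (hP.add hu2).div_const 2
  have hFu : Integrable fun x => F (u x) := integrable_of_abs_le_mul_exp volume hμ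
    (hF.comp hu.continuous) (abs_comp_le_of_decay hdecay hμ.le hM hFM)
  unfold energyDensity
  rw [integral_sub hsum hFu, integral_div, integral_add hP hu2]

end Integrability

theorem integral_sum_sq_partialDeriv_sub_mul_energyDensity_eq_zero {n : ℕ} {u : ℝ^(n + 1) → ℝ}
    {f F : ℝ → ℝ} {C μ M : ℝ} (hu : ContDiff ℝ 2 u) (hF : ∀ t, HasDerivAt F (f t) t)
    (hμ : 0 < μ) (hM : 0 ≤ M) (hFM : ∀ t, |t| ≤ C → |F t| ≤ M * |t|)
    (hdecay : ∀ x, |u x| + ‖gradient u x‖ ≤ C * Real.exp (-μ * ‖x‖))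
    (heq : ∀ x, -lap u x + u x = f (u x)) :
    ∫ x, (∑ j, ∂ j u x ^ 2 - (n + 1 : ℕ) * energyDensity F u x) = 0 := by
  have hF' : Differentiable ℝ F := fun t => (hF t).differentiableAt
  have hdiv := fun x => sum_partialDeriv_pohozaevField hu hF (heq x)
  have hdu : ∀ j x, |∂ j u x| ≤ C * Real.exp (-μ * ‖x‖) := fun j x => by
    linarith [hdecay x, abs_nonneg (u x), abs_partialDeriv_le_norm_gradient u x j]
  simp only [← hdiv]
  refine integral_sum_partialDeriv_eq_zero_of_decay (differentiable_pohozaevField hu hF') ?_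
    (abs_pohozaevField_toLp_le hμ.le hdu (abs_energyDensity_le_of_decay hdecay hμ.le hM hFM))
    (tendsto_pow_mul_mul_exp_neg_mul hμ n _)
  simp only [hdiv]
  exact (integrable_sum_sq_partialDeriv hu hμ hdecay).sub
    ((integrable_energyDensity hu hμ hdecay hF' hM hFM).const_mul _)

end

theorem stmt2_general (N : ℕ) (hN : 3 ≤ N) (f : ℝ → ℝ) (hf : Continuous f)
    (F : ℝ → ℝ) (hF : ∀ t : ℝ, F t = ∫ s in (0 : ℝ)..t, f s)
    (u : EuclideanSpace ℝ (Fin N) → ℝ) (hu : ContDiff ℝ 2 u)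
    (C μ : ℝ) (hμ : 0 < μ)
    (hdecay : ∀ x : EuclideanSpace ℝ (Fin N),
      |u x| + ‖gradient u x‖ ≤ C * Real.exp (-μ * ‖x‖))
    (heq : ∀ x : EuclideanSpace ℝ (Fin N), -lap u x + u x = f (u x)) :
    ((N : ℝ) - 2) / 2 * (∫ x : EuclideanSpace ℝ (Fin N), ‖gradient u x‖ ^ 2) +
      (N : ℝ) * ((1 / 2) * (∫ x : EuclideanSpace ℝ (Fin N), (u x) ^ 2) -
        ∫ x : EuclideanSpace ℝ (Fin N), F (u x)) = 0 := by
  obtain ⟨n, rfl⟩ : ∃ n, N = n + 1 := ⟨N - 1, by omega⟩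
  have hFf : ∀ t, HasDerivAt F (f t) t := fun t => by
    simpa only [← hF] using (hf.integral_hasStrictDerivAt 0 t).hasDerivAt
  have hFd : Differentiable ℝ F := fun t => (hFf t).differentiableAt
  obtain ⟨M, hM, hFM⟩ := exists_abs_intervalIntegral_le_mul_abs hf C
  simp only [← hF] at hFM
  have hpoh :=
    integral_sum_sq_partialDeriv_sub_mul_energyDensity_eq_zero hu hFf hμ hM hFM hdecay heq
  rw [integral_sub (integrable_sum_sq_partialDeriv hu hμ hdecay)
      ((integrable_energyDensity hu hμ hdecay hFd hM hFM).const_mul _),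
    integral_const_mul, integral_energyDensity hu hμ hdecay hFd.continuous hM hFM] at hpoh
  simp only [norm_gradient_sq_eq_sum]
  push_cast at hpoh ⊢
  linarith

/-- Pohozaev identity for classical decaying solutions of `-Δu + u = f(u)` on `ℝ^N`. -/
theorem stmt2 (N : ℕ) (hN : 3 ≤ N) (f : ℝ → ℝ) (hf : Continuous f)
    (F : ℝ → ℝ) (hF : ∀ t : ℝ, F t = ∫ s in (0 : ℝ)..t, f s)
    (u : EuclideanSpace ℝ (Fin N) → ℝ) (hu : ContDiff ℝ 2 u)
    (C μ : ℝ) (hC : 0 < C) (hμ : 0 < μ)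
    (hdecay : ∀ x : EuclideanSpace ℝ (Fin N),
      |u x| + ‖gradient u x‖ ≤ C * Real.exp (-μ * ‖x‖))
    (heq : ∀ x : EuclideanSpace ℝ (Fin N), -lap u x + u x = f (u x)) :
    ((N : ℝ) - 2) / 2 * (∫ x : EuclideanSpace ℝ (Fin N), ‖gradient u x‖ ^ 2) +
      (N : ℝ) * ((1 / 2) * (∫ x : EuclideanSpace ℝ (Fin N), (u x) ^ 2) -
        ∫ x : EuclideanSpace ℝ (Fin N), F (u x)) = 0 :=
  stmt2_general N hN f hf F hF u hu C μ hμ hdecay heq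
end

section
/- (Lions-type vanishing lemma.) Let N ≥ 3 be an integer, 2* = 2N/(N−2), and let R > 0 and C > 0. Let (u_n) be a sequence of continuously differentiable functions u_n : ℝ^N → ℝ such that for every n: ∫_{ℝ^N} u_n² ≤ C, ∫_{ℝ^N} ‖∇u_n‖² ≤ C, and |u_n|^{2*} is integrable on ℝ^N. If sup_{x ∈ ℝ^N} ∫_{B_R(x)} |u_n|^{2*} → 0 as n → ∞, then ∫_{ℝ^N} |u_n|^{2*} → 0 as n → ∞. -/
/-!
Cover `ℝᴺ` by the closed balls of radius `R/2` centred at the lattice `s ℤᴺ`, `s = R / (2√N)`;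
the concentric balls of radius `R` overlap at most `M = (⌈2R/s⌉ + 1)ᴺ` times. For a bump `χ`
equal to `1` on `B(c, R/2)` and supported in `B(c, R)`, the Gagliardo–Nirenberg–Sobolev
inequality applied to `v = χ u`, together with `‖v‖ₚᵖ = ‖v‖ₚ² ‖v‖ₚᵖ⁻² ≤ ‖v‖ₚ² ε^((p-2)/p)`, gives
`∫_{B(c,R/2)} |u|ᵖ ≤ K² ε^((p-2)/p) ∫_{B(c,R)} (|∇u| + L|u|)²` whenever `ε` bounds the mass of
`|u|ᵖ` on every ball of radius `R`. Summing over the lattice,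
`∫ |u|ᵖ ≤ A ε^((p-2)/p) (‖u‖₂² + ‖∇u‖₂²)`, and the right-hand side tends to `0` along the sequence.
-/

open MeasureTheory Metric Set Filter
open scoped NNReal ENNReal

section Lattice

variable {ι : Type*} [Fintype ι]

noncomputable def latticePoint (s : ℝ) (k : ι → ℤ) : EuclideanSpace ℝ ι :=
  WithLp.toLp 2 fun i => s * k i

lemma dist_le_mul_sqrt_card_of_forall_abs_sub_le {x y : EuclideanSpace ℝ ι} {t : ℝ}
    (h : ∀ i, |x i - y i| ≤ t) : dist x y ≤ t * √(Fintype.card ι) := by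
  rcases isEmpty_or_nonempty ι with hι | ⟨⟨i⟩⟩
  · simp [EuclideanSpace.dist_eq]
  have ht : 0 ≤ t := (abs_nonneg _).trans (h i)
  rw [EuclideanSpace.dist_eq, ← Real.sqrt_sq ht, ← Real.sqrt_mul (sq_nonneg t), mul_comm]
  gcongr
  calc ∑ i, dist (x i) (y i) ^ 2 ≤ ∑ _i : ι, t ^ 2 :=
        Finset.sum_le_sum fun i _ => by
          rw [Real.dist_eq]
          exact pow_le_pow_left₀ (abs_nonneg _) (h i) 2
    _ = _ := by simp

lemma dist_latticePoint_floor_le {s : ℝ} (hs : 0 < s) (y : EuclideanSpace ℝ ι) :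
    dist y (latticePoint s fun i => ⌊y i / s⌋) ≤ s * √(Fintype.card ι) := by
  refine dist_le_mul_sqrt_card_of_forall_abs_sub_le fun i => ?_
  have h₁ := Int.floor_le (y i / s)
  have h₂ := Int.lt_floor_add_one (y i / s)
  rw [le_div_iff₀ hs] at h₁
  rw [div_lt_iff₀ hs] at h₂
  simp only [latticePoint]
  rw [abs_le]
  constructor <;> nlinarith

lemma lintegral_le_tsum_setLIntegral_closedBall_latticePoint {s : ℝ} (hs : 0 < s)
    (μ : Measure (EuclideanSpace ℝ ι)) (f : EuclideanSpace ℝ ι → ℝ≥0∞) :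
    ∫⁻ x, f x ∂μ ≤ ∑' k, ∫⁻ x in closedBall (latticePoint s k) (s * √(Fintype.card ι)), f x ∂μ := by
  have hcover : ⋃ k : ι → ℤ, closedBall (latticePoint s k) (s * √(Fintype.card ι)) = univ :=
    eq_univ_of_forall fun y =>
      mem_iUnion.2 ⟨fun i => ⌊y i / s⌋, mem_closedBall.2 (dist_latticePoint_floor_le hs y)⟩
  rw [← setLIntegral_univ, ← hcover]
  exact lintegral_iUnion_le _ _

lemma tsum_indicator_closedBall_latticePoint_le {s : ℝ} (hs : 0 < s) (r : ℝ)
    (x : EuclideanSpace ℝ ι) :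
    ∑' k, (closedBall (latticePoint s k) r).indicator 1 x ≤
      (((⌈2 * r / s⌉₊ + 1) ^ Fintype.card ι : ℕ) : ℝ≥0∞) := by
  classical
  let lo : ι → ℤ := fun i => ⌈(x i - r) / s⌉
  let hi : ι → ℤ := fun i => ⌊(x i + r) / s⌋
  have hmem : ∀ k, x ∈ closedBall (latticePoint s k) r → k ∈ Finset.Icc lo hi := by
    intro k hx
    rw [Finset.mem_Icc]
    have hk : ∀ i, |x i - s * k i| ≤ r := fun i =>
      ((PiLp.dist_apply_le x (latticePoint s k) i).trans (mem_closedBall.1 hx))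
    constructor <;> intro i <;> obtain ⟨h₁, h₂⟩ := abs_le.1 (hk i)
    · exact Int.ceil_le.2 ((div_le_iff₀ hs).2 (by linarith))
    · exact Int.le_floor.2 ((le_div_iff₀ hs).2 (by linarith))
  have hcard : ∀ i, (Finset.Icc (lo i) (hi i)).card ≤ ⌈2 * r / s⌉₊ + 1 := by
    intro i
    have h₁ : (hi i : ℝ) ≤ (x i + r) / s := Int.floor_le _
    have h₂ : (x i - r) / s ≤ lo i := Int.le_ceil _
    have h₃ : (x i + r) / s - (x i - r) / s = 2 * r / s := by ring
    have h₄ := Nat.le_ceil (2 * r / s)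
    have : hi i + 1 - lo i ≤ (⌈2 * r / s⌉₊ : ℤ) + 1 := by
      have : (hi i + 1 - lo i : ℝ) ≤ (⌈2 * r / s⌉₊ : ℝ) + 1 := by linarith
      exact_mod_cast this
    rw [Int.card_Icc]
    omega
  rw [tsum_eq_sum (s := Finset.Icc lo hi) fun k hk =>
    indicator_of_notMem (fun hx => hk (hmem k hx)) _]
  calc ∑ k ∈ Finset.Icc lo hi, (closedBall (latticePoint s k) r).indicator 1 x
      ≤ ∑ _k ∈ Finset.Icc lo hi, (1 : ℝ≥0∞) :=
        Finset.sum_le_sum fun k _ => indicator_le_self' (fun _ _ => zero_le) x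
    _ = (Finset.Icc lo hi).card := by simp
    _ ≤ _ := by
      rw [Pi.card_Icc]
      exact_mod_cast (Finset.prod_le_prod' fun i _ => hcard i).trans (by simp)

end Lattice

lemma tsum_setLIntegral_le_mul_lintegral {α κ : Type*} [MeasurableSpace α] {μ : Measure α}
    [Countable κ] {s : κ → Set α} (hs : ∀ k, MeasurableSet (s k)) {M : ℝ≥0∞}
    (hM : ∀ x, ∑' k, (s k).indicator 1 x ≤ M) {f : α → ℝ≥0∞} (hf : AEMeasurable f μ) :
    ∑' k, ∫⁻ x in s k, f x ∂μ ≤ M * ∫⁻ x, f x ∂μ := by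
  simp_rw [← lintegral_indicator (hs _)]
  rw [← lintegral_tsum fun k => hf.indicator (hs k), ← lintegral_const_mul'' M hf]
  refine lintegral_mono fun x => ?_
  calc ∑' k, (s k).indicator f x = (∑' k, (s k).indicator 1 x) * f x := by
        rw [← ENNReal.tsum_mul_right]
        refine tsum_congr fun k => ?_
        by_cases hx : x ∈ s k <;> simp [hx]
    _ ≤ M * f x := by gcongr; exact hM x

lemma ENNReal.add_mul_sq_le {L : ℝ≥0∞} (hL : 1 ≤ L) (a b : ℝ≥0∞) :
    (a + L * b) ^ 2 ≤ 2 * L ^ 2 * (b ^ 2 + a ^ 2) := by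
  have hsq : (b + a) ^ 2 ≤ 2 * (b ^ 2 + a ^ 2) := by
    convert ENNReal.rpow_add_le_mul_rpow_add_rpow b a one_le_two using 1 <;> norm_num
  calc (a + L * b) ^ 2 ≤ (L * a + L * b) ^ 2 := by gcongr; exact le_mul_of_one_le_left' hL
    _ = L ^ 2 * (b + a) ^ 2 := by ring
    _ ≤ L ^ 2 * (2 * (b ^ 2 + a ^ 2)) := by gcongr
    _ = 2 * L ^ 2 * (b ^ 2 + a ^ 2) := by ring

lemma ENNReal.rpow_le_sq_mul_rpow {T B a : ℝ≥0∞} {p : ℝ} (hp : 2 ≤ p) (hTB : T ≤ B)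
    (hTa : T ^ p ≤ a) : T ^ p ≤ B ^ 2 * a ^ ((p - 2) / p) := by
  have hp0 : p ≠ 0 := by positivity
  calc T ^ p = T ^ (2 : ℝ) * (T ^ p) ^ ((p - 2) / p) := by
        rw [← ENNReal.rpow_mul, mul_div_cancel₀ _ hp0, ← ENNReal.rpow_add_of_nonneg _ _
          zero_le_two (by linarith), add_sub_cancel]
    _ ≤ B ^ 2 * a ^ ((p - 2) / p) := by
        rw [ENNReal.rpow_two]
        gcongr

lemma two_lt_of_inv_eq_inv_two_sub_inv {p : ℝ} {n : ℕ} (hn : 2 < n)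
    (hp : p⁻¹ = 2⁻¹ - (n : ℝ)⁻¹) : 2 < p := by
  have hn' : (2 : ℝ) < n := by exact_mod_cast hn
  have hp0 : 0 < p := inv_pos.1 (by rw [hp, sub_pos]; exact inv_strictAnti₀ two_pos hn')
  rw [← inv_lt_inv₀ hp0 two_pos, hp]
  exact sub_lt_self _ (by positivity)

namespace ContDiffBump

variable {E : Type*} [NormedAddCommGroup E] [InnerProductSpace ℝ E] [FiniteDimensional ℝ E]
  {c : E} (φ : ContDiffBump c)

lemma enorm_mul_le (w : E → ℝ) (x : E) : ‖φ x * w x‖ₑ ≤ ‖w x‖ₑ := by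
  rw [enorm_mul]
  refine mul_le_of_le_one_left zero_le ?_
  rw [Real.enorm_of_nonneg φ.nonneg]
  exact ENNReal.ofReal_le_one.2 φ.le_one

lemma enorm_fderiv_mul_le {L : ℝ≥0} (hL : ∀ x, ‖fderiv ℝ φ x‖₊ ≤ L) {w : E → ℝ}
    (hw : Differentiable ℝ w) (x : E) :
    ‖fderiv ℝ (fun y => φ y * w y) x‖ₑ ≤ ‖fderiv ℝ w x‖ₑ + L * ‖w x‖ₑ := by
  rw [fderiv_fun_mul ((φ.contDiff (n := 1)).differentiable one_ne_zero x) (hw x)]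
  refine (enorm_add_le (φ x • fderiv ℝ w x) (w x • fderiv ℝ φ x)).trans (add_le_add ?_ ?_)
  · rw [enorm_smul]
    exact mul_le_of_le_one_left zero_le (by simpa using φ.enorm_mul_le 1 x)
  · rw [enorm_smul, mul_comm]
    gcongr
    exact ENNReal.coe_le_coe.2 (hL x)

lemma tsupport_mul_subset (w : E → ℝ) :
    tsupport (fun y => φ y * w y) ⊆ closedBall c φ.rOut :=
  tsupport_mul_subset_left.trans φ.tsupport_eq.le

lemma exists_forall_nnnorm_fderiv_le {r R : ℝ} (hr : 0 < r) (hrR : r < R) :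
    ∃ L : ℝ≥0, ∀ (c : E) (φ : ContDiffBump c), φ.rIn = r → φ.rOut = R →
      ∀ x, ‖fderiv ℝ φ x‖₊ ≤ L := by
  let ψ : ContDiffBump (0 : E) := ⟨r, R, hr, hrR⟩
  obtain ⟨L, hL⟩ := (ψ.hasCompactSupport.fderiv ℝ).exists_bound_of_continuous
    (ψ.contDiff.continuous_fderiv one_ne_zero)
  refine ⟨L.toNNReal, fun c φ hIn hOut x => ?_⟩
  have hφ : (φ : E → ℝ) = fun y => ψ (y - c) := by
    funext y
    simp [ContDiffBump.apply, ψ, hIn, hOut]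
  rw [hφ, fderiv_comp_sub, ← NNReal.coe_le_coe, coe_nnnorm]
  exact (hL _).trans (Real.le_coe_toNNReal L)

variable [MeasurableSpace E] [BorelSpace E] (μ : Measure E) [μ.IsAddHaarMeasure]

theorem lintegral_rpow_closedBall_rIn_le {L : ℝ≥0} (hL : ∀ x, ‖fderiv ℝ φ x‖₊ ≤ L)
    {w : E → ℝ} (hw : ContDiff ℝ 1 w) {p : ℝ} (hn : 2 < Module.finrank ℝ E)
    (hp : p⁻¹ = 2⁻¹ - (Module.finrank ℝ E : ℝ)⁻¹) :
    ∫⁻ x in closedBall c φ.rIn, ‖w x‖ₑ ^ p ∂μ ≤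
      (eLpNormLESNormFDerivOfEqInnerConst μ 2 : ℝ≥0∞) ^ 2 *
        (∫⁻ x in closedBall c φ.rOut, ‖w x‖ₑ ^ p ∂μ) ^ ((p - 2) / p) *
        ∫⁻ x in closedBall c φ.rOut, (‖fderiv ℝ w x‖ₑ + L * ‖w x‖ₑ) ^ 2 ∂μ := by
  set v : E → ℝ := fun y => φ y * w y
  have hp2 : 2 < p := two_lt_of_inv_eq_inv_two_sub_inv hn hp
  have hp0 : 0 < p := by linarith
  have hsupp : ∀ f : E → ℝ≥0∞, Function.support f ⊆ tsupport v →
      ∫⁻ x, f x ∂μ = ∫⁻ x in closedBall c φ.rOut, f x ∂μ := fun f hf =>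
    (setLIntegral_eq_of_support_subset (hf.trans (φ.tsupport_mul_subset w))).symm
  have hSob : eLpNorm v p.toNNReal μ ≤
      eLpNormLESNormFDerivOfEqInnerConst μ 2 * eLpNorm (fderiv ℝ v) (2 : ℝ≥0) μ :=
    eLpNorm_le_eLpNorm_fderiv_of_eq_inner μ (φ.contDiff.mul hw) φ.hasCompactSupport.mul_right
      one_le_two (by omega) (by rw [Real.coe_toNNReal _ hp0.le, hp]; norm_num)
  have hT : eLpNorm v p.toNNReal μ ^ p = ∫⁻ x, ‖v x‖ₑ ^ p ∂μ := by
    simpa [Real.coe_toNNReal _ hp0.le] using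
      eLpNorm_nnreal_pow_eq_lintegral (μ := μ) (f := v) (p := p.toNNReal) (by simpa using hp0)
  have hG : eLpNorm (fderiv ℝ v) (2 : ℝ≥0) μ ^ 2 = ∫⁻ x, ‖fderiv ℝ v x‖ₑ ^ 2 ∂μ := by
    simpa using eLpNorm_nnreal_pow_eq_lintegral (μ := μ) (f := fderiv ℝ v) (p := 2) two_ne_zero
  have hv_le : ∫⁻ x, ‖v x‖ₑ ^ p ∂μ ≤ ∫⁻ x in closedBall c φ.rOut, ‖w x‖ₑ ^ p ∂μ := by
    rw [hsupp]
    · exact setLIntegral_mono' measurableSet_closedBall fun x _ =>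
        ENNReal.rpow_le_rpow (φ.enorm_mul_le w x) hp0.le
    · intro x hx
      by_contra hxv
      simp [image_eq_zero_of_notMem_tsupport hxv, hp0] at hx
  have hDv_le : ∫⁻ x, ‖fderiv ℝ v x‖ₑ ^ 2 ∂μ ≤
      ∫⁻ x in closedBall c φ.rOut, (‖fderiv ℝ w x‖ₑ + L * ‖w x‖ₑ) ^ 2 ∂μ := by
    rw [hsupp]
    · exact setLIntegral_mono' measurableSet_closedBall fun x _ =>
        pow_le_pow_left' (φ.enorm_fderiv_mul_le hL (hw.differentiable one_ne_zero) x) 2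
    · intro x hx
      refine support_fderiv_subset ℝ fun h => hx ?_
      simp [h, enorm_eq_nnnorm]
  calc ∫⁻ x in closedBall c φ.rIn, ‖w x‖ₑ ^ p ∂μ
      = ∫⁻ x in closedBall c φ.rIn, ‖v x‖ₑ ^ p ∂μ :=
        setLIntegral_congr_fun measurableSet_closedBall fun x hx => by
          simp [v, φ.one_of_mem_closedBall hx]
    _ ≤ eLpNorm v p.toNNReal μ ^ p := hT ▸ setLIntegral_le_lintegral _ _
    _ ≤ (eLpNormLESNormFDerivOfEqInnerConst μ 2 * eLpNorm (fderiv ℝ v) (2 : ℝ≥0) μ) ^ 2 *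
          (∫⁻ x in closedBall c φ.rOut, ‖w x‖ₑ ^ p ∂μ) ^ ((p - 2) / p) :=
        ENNReal.rpow_le_sq_mul_rpow hp2.le hSob (hT ▸ hv_le)
    _ ≤ _ := by
        rw [mul_pow, hG, mul_right_comm]
        gcongr

end ContDiffBump

theorem exists_lintegral_rpow_le_mul_rpow {ι : Type*} [Fintype ι]
    (μ : Measure (EuclideanSpace ℝ ι)) [μ.IsAddHaarMeasure] {p : ℝ}
    (hn : 2 < Fintype.card ι) (hp : p⁻¹ = 2⁻¹ - (Fintype.card ι : ℝ)⁻¹) {R : ℝ} (hR : 0 < R) :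
    ∃ A : ℝ≥0∞, A ≠ ⊤ ∧ ∀ w : EuclideanSpace ℝ ι → ℝ, ContDiff ℝ 1 w → ∀ ε : ℝ≥0∞,
      (∀ x, ∫⁻ y in closedBall x R, ‖w y‖ₑ ^ p ∂μ ≤ ε) →
      ∫⁻ x, ‖w x‖ₑ ^ p ∂μ ≤
        A * ε ^ ((p - 2) / p) * (∫⁻ x, ‖w x‖ₑ ^ 2 ∂μ + ∫⁻ x, ‖fderiv ℝ w x‖ₑ ^ 2 ∂μ) := by
  set n := Fintype.card ι
  have hn' : 2 < Module.finrank ℝ (EuclideanSpace ℝ ι) := by rwa [finrank_euclideanSpace]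
  have hp' : p⁻¹ = 2⁻¹ - (Module.finrank ℝ (EuclideanSpace ℝ ι) : ℝ)⁻¹ := by
    rwa [finrank_euclideanSpace]
  have hθ : 0 ≤ (p - 2) / p := by
    have := two_lt_of_inv_eq_inv_two_sub_inv hn hp
    exact div_nonneg (by linarith) (by linarith)
  set s := R / (2 * √n)
  have hs : 0 < s := by positivity
  have hsn : s * √n = R / 2 := by
    have : 0 < √n := by positivity
    simp only [s]
    field_simp
  let φ (k : ι → ℤ) : ContDiffBump (latticePoint s k) := ⟨R / 2, R, half_pos hR, half_lt_self hR⟩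
  obtain ⟨L₀, hL₀⟩ := ContDiffBump.exists_forall_nnnorm_fderiv_le
    (E := EuclideanSpace ℝ ι) (half_pos hR) (half_lt_self hR)
  set L := max 1 L₀
  set K := eLpNormLESNormFDerivOfEqInnerConst μ 2
  set M : ℕ := (⌈2 * R / s⌉₊ + 1) ^ n
  refine ⟨(K : ℝ≥0∞) ^ 2 * M * (2 * L ^ 2), by simp [ENNReal.mul_eq_top], fun w hw ε hε => ?_⟩
  set g : EuclideanSpace ℝ ι → ℝ≥0∞ := fun x => (‖fderiv ℝ w x‖ₑ + L * ‖w x‖ₑ) ^ 2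
  have hg : AEMeasurable g μ := by
    have := hw.continuous
    have := hw.continuous_fderiv one_ne_zero
    fun_prop
  have hw2 : Measurable fun x => ‖w x‖ₑ ^ 2 := by
    have := hw.continuous
    fun_prop
  calc ∫⁻ x, ‖w x‖ₑ ^ p ∂μ
      ≤ ∑' k, ∫⁻ x in closedBall (latticePoint s k) (R / 2), ‖w x‖ₑ ^ p ∂μ :=
        hsn ▸ lintegral_le_tsum_setLIntegral_closedBall_latticePoint hs μ _
    _ ≤ ∑' k, (K : ℝ≥0∞) ^ 2 * ε ^ ((p - 2) / p) *
          ∫⁻ x in closedBall (latticePoint s k) R, g x ∂μ := by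
        gcongr with k
        refine ((φ k).lintegral_rpow_closedBall_rIn_le μ
          (fun x => (hL₀ _ (φ k) rfl rfl x).trans (le_max_right 1 L₀)) hw hn' hp').trans ?_
        gcongr
        exact hε _
    _ = (K : ℝ≥0∞) ^ 2 * ε ^ ((p - 2) / p) *
          ∑' k, ∫⁻ x in closedBall (latticePoint s k) R, g x ∂μ := ENNReal.tsum_mul_left
    _ ≤ (K : ℝ≥0∞) ^ 2 * ε ^ ((p - 2) / p) * (M * ∫⁻ x, g x ∂μ) := by
        gcongr
        exact tsum_setLIntegral_le_mul_lintegral (fun _ => measurableSet_closedBall)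
          (tsum_indicator_closedBall_latticePoint_le hs R) hg
    _ ≤ (K : ℝ≥0∞) ^ 2 * ε ^ ((p - 2) / p) *
          (M * ∫⁻ x, 2 * L ^ 2 * (‖w x‖ₑ ^ 2 + ‖fderiv ℝ w x‖ₑ ^ 2) ∂μ) := by
        gcongr with x
        exact ENNReal.add_mul_sq_le (ENNReal.one_le_coe_iff.2 (le_max_left 1 L₀)) _ _
    _ = _ := by
        rw [lintegral_const_mul' _ _ (by simp [ENNReal.mul_eq_top]), lintegral_add_left hw2]
        ring

lemma Real.enorm_rpow_eq_ofReal (a : ℝ) {p : ℝ} (hp : 0 ≤ p) :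
    ‖a‖ₑ ^ p = ENNReal.ofReal (|a| ^ p) := by
  rw [Real.enorm_eq_ofReal_abs, ENNReal.ofReal_rpow_of_nonneg (abs_nonneg a) hp]

theorem exists_integral_rpow_le_mul_rpow {ι : Type*} [Fintype ι]
    (μ : Measure (EuclideanSpace ℝ ι)) [μ.IsAddHaarMeasure] {p : ℝ}
    (hn : 2 < Fintype.card ι) (hp : p⁻¹ = 2⁻¹ - (Fintype.card ι : ℝ)⁻¹) {R : ℝ} (hR : 0 < R) :
    ∃ A : ℝ, 0 ≤ A ∧ ∀ w : EuclideanSpace ℝ ι → ℝ, ContDiff ℝ 1 w →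
      Integrable (fun x => w x ^ 2) μ → Integrable (fun x => ‖gradient w x‖ ^ 2) μ →
      Integrable (fun x => |w x| ^ p) μ →
      ∫ x, |w x| ^ p ∂μ ≤ A * (⨆ x, ∫ y in closedBall x R, |w y| ^ p ∂μ) ^ ((p - 2) / p) *
        (∫ x, w x ^ 2 ∂μ + ∫ x, ‖gradient w x‖ ^ 2 ∂μ) := by
  obtain ⟨A, hA, hbound⟩ := exists_lintegral_rpow_le_mul_rpow μ hn hp hR
  refine ⟨A.toReal, ENNReal.toReal_nonneg, fun w hw hw2 hDw2 hwp => ?_⟩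
  have hp0 : 0 ≤ p := by linarith [two_lt_of_inv_eq_inv_two_sub_inv hn hp]
  set ε := ⨆ x, ∫ y in closedBall x R, |w y| ^ p ∂μ
  have hwp_nonneg : ∀ x, 0 ≤ |w x| ^ p := fun x => by positivity
  have hε0 : 0 ≤ ε := Real.iSup_nonneg fun x =>
    setIntegral_nonneg measurableSet_closedBall fun y _ => hwp_nonneg y
  have hball : ∀ x, ∫⁻ y in closedBall x R, ‖w y‖ₑ ^ p ∂μ ≤ ENNReal.ofReal ε := by
    intro x
    simp_rw [Real.enorm_rpow_eq_ofReal _ hp0]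
    rw [← ofReal_integral_eq_lintegral_ofReal hwp.integrableOn (ae_of_all _ hwp_nonneg)]
    refine ENNReal.ofReal_le_ofReal (le_ciSup (f := fun x => ∫ y in closedBall x R, |w y| ^ p ∂μ)
      ⟨∫ y, |w y| ^ p ∂μ, forall_mem_range.2 fun x => ?_⟩ x)
    exact setIntegral_le_integral hwp (ae_of_all _ hwp_nonneg)
  have hθ : 0 ≤ (p - 2) / p := by
    have := two_lt_of_inv_eq_inv_two_sub_inv hn hp
    exact div_nonneg (by linarith) (by linarith)
  have hwp_eq : ∫⁻ x, ‖w x‖ₑ ^ p ∂μ = ENNReal.ofReal (∫ x, |w x| ^ p ∂μ) := by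
    simp_rw [Real.enorm_rpow_eq_ofReal _ hp0]
    exact (ofReal_integral_eq_lintegral_ofReal hwp (ae_of_all _ hwp_nonneg)).symm
  have hw2_eq : ∫⁻ x, ‖w x‖ₑ ^ 2 ∂μ = ENNReal.ofReal (∫ x, w x ^ 2 ∂μ) := by
    rw [ofReal_integral_eq_lintegral_ofReal hw2 (ae_of_all _ fun x => sq_nonneg _)]
    congr! 2 with x
    rw [Real.enorm_eq_ofReal_abs, ← ENNReal.ofReal_pow (abs_nonneg _), sq_abs]
  have hDw2_eq :
      ∫⁻ x, ‖fderiv ℝ w x‖ₑ ^ 2 ∂μ = ENNReal.ofReal (∫ x, ‖gradient w x‖ ^ 2 ∂μ) := by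
    rw [ofReal_integral_eq_lintegral_ofReal hDw2 (ae_of_all _ fun x => sq_nonneg _)]
    congr! 2 with x
    rw [gradient, LinearIsometryEquiv.norm_map, ENNReal.ofReal_pow (norm_nonneg _), ofReal_norm]
  have key := hbound w hw _ hball
  rw [hwp_eq, hw2_eq, hDw2_eq, ← ENNReal.ofReal_add (integral_nonneg fun _ => sq_nonneg _)
    (integral_nonneg fun _ => sq_nonneg _), ENNReal.ofReal_rpow_of_nonneg hε0 hθ,
    ← ENNReal.ofReal_toReal hA, ← ENNReal.ofReal_mul ENNReal.toReal_nonneg,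
    ← ENNReal.ofReal_mul (by positivity)] at key
  exact (ENNReal.ofReal_le_ofReal_iff (by positivity)).1 key

theorem stmt7_general (N : ℕ) (hN : 3 ≤ N) (p : ℝ) (hp : p = 2 * N / ((N : ℝ) - 2))
    (R C : ℝ) (hR : 0 < R)
    (u : ℕ → EuclideanSpace ℝ (Fin N) → ℝ)
    (hu : ∀ n, ContDiff ℝ 1 (u n))
    (hb1 : ∀ n, Integrable (fun x : EuclideanSpace ℝ (Fin N) => (u n x) ^ 2) ∧
      (∫ x : EuclideanSpace ℝ (Fin N), (u n x) ^ 2) ≤ C)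
    (hb2 : ∀ n, Integrable (fun x : EuclideanSpace ℝ (Fin N) => ‖gradient (u n) x‖ ^ 2) ∧
      (∫ x : EuclideanSpace ℝ (Fin N), ‖gradient (u n) x‖ ^ 2) ≤ C)
    (hb3 : ∀ n, Integrable (fun x : EuclideanSpace ℝ (Fin N) => |u n x| ^ p))
    (hvan : Tendsto
      (fun n => ⨆ x : EuclideanSpace ℝ (Fin N), ∫ y in closedBall x R, |u n y| ^ p)
      atTop (nhds 0)) :
    Tendsto (fun n => ∫ y : EuclideanSpace ℝ (Fin N), |u n y| ^ p) atTop (nhds 0) := by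
  have hn : 2 < Fintype.card (Fin N) := by rw [Fintype.card_fin]; omega
  have hp_inv : p⁻¹ = 2⁻¹ - (Fintype.card (Fin N) : ℝ)⁻¹ := by
    have : (2 : ℝ) < N := by exact_mod_cast hn.trans_eq (Fintype.card_fin N)
    rw [Fintype.card_fin, hp]
    field_simp
  have hθ : 0 < (p - 2) / p := by
    have := two_lt_of_inv_eq_inv_two_sub_inv hn hp_inv
    exact div_pos (by linarith) (by linarith)
  obtain ⟨A, hA, hbound⟩ := exists_integral_rpow_le_mul_rpow volume hn hp_inv hR
  have hlim := ((hvan.rpow_const (Or.inr hθ.le)).const_mul A).mul_const (C + C)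
  rw [Real.zero_rpow hθ.ne', mul_zero, zero_mul] at hlim
  refine squeeze_zero (fun n => integral_nonneg fun y => by positivity)
    (fun n => (hbound (u n) (hu n) (hb1 n).1 (hb2 n).1 (hb3 n)).trans ?_) hlim
  have hε : 0 ≤ ⨆ x : EuclideanSpace ℝ (Fin N), ∫ y in closedBall x R, |u n y| ^ p :=
    Real.iSup_nonneg fun x => setIntegral_nonneg measurableSet_closedBall fun y _ => by positivity
  gcongr
  exacts [(hb1 n).2, (hb2 n).2]

/-- Lions-type vanishing lemma: if a bounded-in-`H¹` sequence has uniformly vanishing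
local `L^{2*}` mass, then its `L^{2*}` norm tends to zero. -/
theorem stmt7 (N : ℕ) (hN : 3 ≤ N) (p : ℝ) (hp : p = 2 * N / ((N : ℝ) - 2))
    (R C : ℝ) (hR : 0 < R) (hC : 0 < C)
    (u : ℕ → EuclideanSpace ℝ (Fin N) → ℝ)
    (hu : ∀ n, ContDiff ℝ 1 (u n))
    (hb1 : ∀ n, Integrable (fun x : EuclideanSpace ℝ (Fin N) => (u n x) ^ 2) ∧
      (∫ x : EuclideanSpace ℝ (Fin N), (u n x) ^ 2) ≤ C)
    (hb2 : ∀ n, Integrable (fun x : EuclideanSpace ℝ (Fin N) => ‖gradient (u n) x‖ ^ 2) ∧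
      (∫ x : EuclideanSpace ℝ (Fin N), ‖gradient (u n) x‖ ^ 2) ≤ C)
    (hb3 : ∀ n, Integrable (fun x : EuclideanSpace ℝ (Fin N) => |u n x| ^ p))
    (hvan : Tendsto
      (fun n => ⨆ x : EuclideanSpace ℝ (Fin N), ∫ y in closedBall x R, |u n y| ^ p)
      atTop (nhds 0)) :
    Tendsto (fun n => ∫ y : EuclideanSpace ℝ (Fin N), |u n y| ^ p) atTop (nhds 0) :=
  stmt7_general N hN p hp R C hR u hu hb1 hb2 hb3 hvan
end

section
/- (Existence of a concentration radius.) Let N ≥ 1 be an integer, let h : ℝ^N → ℝ be nonnegative and Lebesgue integrable, and let K ⊆ ℝ^N be a nonempty compact set. For r ≥ 0 define G(r) = sup_{x ∈ K} ∫_{B_r(x)} h, where B_r(x) is the closed ball of radius r centered at x. Then for every τ with 0 < τ < ∫_{ℝ^N} h there exist σ > 0 and z ∈ K such that ∫_{B_σ(z)} h = τ and ∫_{B_σ(x)} h ≤ τ for all x ∈ K (that is, G(σ) = τ and the supremum defining G(σ) is attained at z). -/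
open MeasureTheory Metric Set Filter
open scoped ENNReal Topology

/-!
Work with the finite measure `ν = h · volume`, whose spheres are null, and let `σ` be the supremum
of the radii `r` with `ν (closedBall x r) ≤ τ` for all `x ∈ K`. Such radii exist since `ν` has no
atoms and `K` is compact, and they are bounded since `τ < ν univ`. As spheres are null, a closed
ball has the mass of the open one, so continuity from below makes `σ` such a radius too. If every
ball of radius `σ` centred in `K` had mass `< τ`, continuity from above together with compactness
of `K` would give a uniform `ε > 0` with all balls of radius `σ + ε` still of mass `< τ`,
contradicting the choice of `σ`.
-/

namespace MeasureTheory

variable {X : Type*} [PseudoMetricSpace X] [MeasurableSpace X] (ν : Measure X)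

theorem tendsto_measure_closedBall_nhdsGT [OpensMeasurableSpace X] [IsFiniteMeasure ν]
    (x : X) (r : ℝ) :
    Tendsto (fun s ↦ ν (closedBall x s)) (𝓝[>] r) (𝓝 (ν (closedBall x r))) := by
  have := tendsto_measure_biInter_gt (μ := ν) (s := closedBall x) (a := r)
    (fun _ _ ↦ measurableSet_closedBall.nullMeasurableSet)
    (fun _ _ _ hij ↦ closedBall_subset_closedBall hij) ⟨r + 1, by linarith, measure_ne_top _ _⟩
  rwa [biInter_gt_closedBall] at this

theorem measure_ball_eq_iSup_measure_closedBall (x : X) (r : ℝ) :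
    ν (ball x r) = ⨆ s : Iio r, ν (closedBall x s) := by
  rw [← biUnion_lt_closedBall, ← iUnion_subtype (· < r) fun s ↦ closedBall x s]
  exact Monotone.measure_iUnion (ι := Iio r) fun _ _ hst ↦ closedBall_subset_closedBall hst

theorem measure_closedBall_le_of_forall_lt {x : X} {r : ℝ} {c : ℝ≥0∞}
    (hsphere : ν (sphere x r) = 0) (h : ∀ s < r, ν (closedBall x s) ≤ c) :
    ν (closedBall x r) ≤ c :=
  calc ν (closedBall x r) ≤ ν (ball x r) + ν (sphere x r) := by
        rw [← ball_union_sphere]; exact measure_union_le _ _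
    _ = ⨆ s : Iio r, ν (closedBall x s) := by
        rw [hsphere, add_zero, measure_ball_eq_iSup_measure_closedBall]
    _ ≤ c := iSup_le fun s ↦ h s s.2

theorem exists_pos_forall_measure_closedBall_add_lt [OpensMeasurableSpace X]
    [IsFiniteMeasure ν] {K : Set X} (hK : IsCompact K) {r : ℝ} {c : ℝ≥0∞}
    (h : ∀ x ∈ K, ν (closedBall x r) < c) :
    ∃ ε > 0, ∀ y ∈ K, ν (closedBall y (r + ε)) < c := by
  have hnear : ∀ x ∈ K, ∀ᶠ p : ℝ × X in 𝓝 (0, x), ν (closedBall p.2 (r + p.1)) < c := by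
    intro x hx
    obtain ⟨s, hsc, hrs⟩ := (((tendsto_measure_closedBall_nhdsGT ν x r).eventually
      (gt_mem_nhds (h x hx))).and self_mem_nhdsWithin).exists
    filter_upwards [ball_mem_nhds (0, x) (half_pos (sub_pos.2 hrs))] with p hp
    rw [mem_ball, Prod.dist_eq, max_lt_iff, Real.dist_0_eq_abs] at hp
    refine (measure_mono (closedBall_subset_closedBall' ?_)).trans_lt hsc
    linarith [le_abs_self p.1]
  obtain ⟨ε, hεK, hε⟩ := (((hK.eventually_forall_of_forall_eventually
    (P := fun δ y ↦ ν (closedBall y (r + δ)) < c) hnear).filter_mono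
    nhdsWithin_le_nhds).and (self_mem_nhdsWithin : Ioi (0 : ℝ) ∈ 𝓝[>] 0)).exists
  exact ⟨ε, hε, hεK⟩

theorem exists_pos_radius_measure_closedBall_eq_of_lt [OpensMeasurableSpace X]
    [IsFiniteMeasure ν] (hsphere : ∀ x r, ν (sphere x r) = 0) {K : Set X} (hK : IsCompact K)
    (hKne : K.Nonempty)
    {τ : ℝ≥0∞} (hτ : 0 < τ) (hτν : τ < ν univ) :
    ∃ σ > 0, ∃ z ∈ K, ν (closedBall z σ) = τ ∧ ∀ x ∈ K, ν (closedBall x σ) ≤ τ := by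
  set S := {r : ℝ | ∀ x ∈ K, ν (closedBall x r) ≤ τ}
  obtain ⟨r₀, hr₀, hr₀S⟩ : ∃ r₀ > 0, r₀ ∈ S := by
    obtain ⟨ε, hε, hεK⟩ := exists_pos_forall_measure_closedBall_add_lt ν hK (r := 0) (c := τ)
      fun x _ ↦ by rwa [← ball_union_sphere, ball_zero, empty_union, hsphere]
    exact ⟨ε, hε, fun y hy ↦ by simpa using (hεK y hy).le⟩
  obtain ⟨x₀, hx₀⟩ := hKne
  obtain ⟨R, hR⟩ : ∃ R : ℕ, τ < ν (closedBall x₀ R) := by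
    rwa [← iUnion_closedBall_nat x₀, Monotone.measure_iUnion fun _ _ hmn ↦
      closedBall_subset_closedBall (by exact_mod_cast hmn), lt_iSup_iff] at hτν
  have hbdd : BddAbove S := ⟨R, fun r hr ↦ le_of_not_gt fun hRr ↦
    (hR.trans_le (measure_mono (closedBall_subset_closedBall hRr.le))).not_ge (hr x₀ hx₀)⟩
  set σ := sSup S
  have hσS : σ ∈ S := fun x hx ↦ measure_closedBall_le_of_forall_lt ν (hsphere x σ) fun s hs ↦ by
    obtain ⟨r, hrS, hsr⟩ := exists_lt_of_lt_csSup ⟨r₀, hr₀S⟩ hs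
    exact (measure_mono (closedBall_subset_closedBall hsr.le)).trans (hrS x hx)
  obtain ⟨z, hzK, hz⟩ : ∃ z ∈ K, τ ≤ ν (closedBall z σ) := by
    by_contra! hlt
    obtain ⟨ε, hε, hεK⟩ := exists_pos_forall_measure_closedBall_add_lt ν hK hlt
    have : σ + ε ≤ σ := le_csSup hbdd fun y hy ↦ (hεK y hy).le
    linarith
  exact ⟨σ, hr₀.trans_le (le_csSup hbdd hr₀S), z, hzK, le_antisymm (hσS z hzK) hz, hσS⟩

theorem withDensity_ofReal_apply_eq_ofReal_setIntegral {α : Type*} [MeasurableSpace α]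
    {μ : Measure α} {f : α → ℝ} (hf : Integrable f μ) (hf₀ : ∀ x, 0 ≤ f x) {s : Set α}
    (hs : MeasurableSet s) :
    μ.withDensity (fun x ↦ ENNReal.ofReal (f x)) s = ENNReal.ofReal (∫ x in s, f x ∂μ) := by
  rw [withDensity_apply _ hs, ofReal_integral_eq_lintegral_ofReal hf.integrableOn
    (ae_of_all _ hf₀)]

end MeasureTheory

/-- Existence of a concentration radius: for any prescribed mass level `τ` below the total
mass, there is a radius `σ` and a center `z ∈ K` where the concentration function
`G(σ) = sup_{x ∈ K} ∫_{B_σ(x)} h` attains the value `τ`. -/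
theorem stmt9 (N : ℕ) (hN : 1 ≤ N)
    (h : EuclideanSpace ℝ (Fin N) → ℝ) (hpos : ∀ x, 0 ≤ h x) (hint : Integrable h)
    (K : Set (EuclideanSpace ℝ (Fin N))) (hKne : K.Nonempty) (hKcpt : IsCompact K) :
    ∀ τ : ℝ, 0 < τ → τ < (∫ x : EuclideanSpace ℝ (Fin N), h x) →
      ∃ σ > (0 : ℝ), ∃ z ∈ K, (∫ x in closedBall z σ, h x) = τ ∧
        ∀ x ∈ K, (∫ y in closedBall x σ, h y) ≤ τ := by
  intro τ hτ hτh
  -- in positive dimension spheres are Lebesgue-null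
  obtain ⟨n, rfl⟩ : ∃ n, N = n + 1 := ⟨N - 1, by omega⟩
  set ν := volume.withDensity fun x ↦ ENNReal.ofReal (h x)
  have : IsFiniteMeasure ν := isFiniteMeasure_withDensity_ofReal hint.2
  have hν : ∀ s, MeasurableSet s → ν s = ENNReal.ofReal (∫ x in s, h x) :=
    fun _ ↦ withDensity_ofReal_apply_eq_ofReal_setIntegral hint hpos
  have hsphere : ∀ x r, ν (sphere x r) = 0 := fun x r ↦
    withDensity_absolutelyContinuous _ _ (Measure.addHaar_sphere volume x r)
  have hτν : ENNReal.ofReal τ < ν univ := by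
    rwa [hν _ MeasurableSet.univ, setIntegral_univ, ENNReal.ofReal_lt_ofReal_iff (hτ.trans hτh)]
  obtain ⟨σ, hσ, z, hzK, hz, hle⟩ :=
    exists_pos_radius_measure_closedBall_eq_of_lt ν hsphere hKcpt hKne
    (ENNReal.ofReal_pos.2 hτ) hτν
  simp only [hν _ measurableSet_closedBall] at hz hle
  refine ⟨σ, hσ, z, hzK, ?_, fun x hx ↦ ?_⟩
  · exact (ENNReal.ofReal_eq_ofReal_iff (setIntegral_nonneg measurableSet_closedBall
      fun y _ ↦ hpos y) hτ.le).1 hz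
  · exact (ENNReal.ofReal_le_ofReal_iff hτ.le).1 (hle x hx)
end
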